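/- Let R be a commutative ℕ-graded connected Noetherian k-algebra and M a finitely generated ℕ-graded R-module. Then in ℤ[[t]] one has Hilb(M,t) = Hilb(R,t) · Σ_{i≥0} (-1)^i Hilb(Tor_i^R(M,k), t), where the alternating sum converges as a formal power series (each coefficient involves only finitely many terms). -/

import Mathlib

/-!
A finitely generated homogeneous submodule `K` of a graded module is minimally generated by
homogeneous lifts of a `k`-basis of `K ⧸ 𝒜₊K` (graded Nakayama), and the syzygies of such a
generating set have all their coordinates in `𝒜₊`. Iterating (`R` is Noetherian) gives a minimal
graded free resolution `F` of `M` whose generator degrees strictly increase with homological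
degree, so `(Fᵢ)_N = 0` for `i > N`. Since `R` is connected and Noetherian, every `R_p` is
finite-dimensional over `k`, and exactness of `F` in degree `N` gives
`dim M_N = Σ_{i ≤ N} (-1)ⁱ dim (Fᵢ)_N`, with `dim (Fᵢ)_N = Σ_p dim R_p · #{j | e i j = N - p}`.
-/

open DirectSum HomogeneousIdeal

section Homogeneous

variable {ι M N σ τ : Type*} [DecidableEq ι] [AddCommMonoid M] [AddCommMonoid N]
  [SetLike σ M] [AddSubmonoidClass σ M] [SetLike τ N] [AddSubmonoidClass τ N]
  {ℳ : ι → σ} {𝒩 : ι → τ} [Decomposition ℳ] [Decomposition 𝒩]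

theorem coe_decompose_map {F : Type*} [FunLike F M N] [AddMonoidHomClass F M N] {f : F}
    (hf : ∀ i, ∀ x ∈ ℳ i, f x ∈ 𝒩 i) (x : M) (i : ι) :
    (decompose 𝒩 (f x) i : N) = f (decompose ℳ x i) := by
  induction x using Decomposition.inductionOn ℳ with
  | zero => simp
  | add x y hx hy =>
    simp only [map_add, decompose_add, DirectSum.add_apply, AddMemClass.coe_add, hx, hy]
  | @homogeneous j x =>
    by_cases hij : j = i
    · subst hij; rw [decompose_of_mem_same ℳ x.2, decompose_of_mem_same 𝒩 (hf j x x.2)]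
    · rw [decompose_of_mem_ne ℳ x.2 hij, decompose_of_mem_ne 𝒩 (hf j x x.2) hij, map_zero]

theorem LinearMap.isHomogeneous_ker {R : Type*} [Semiring R] [Module R M] [Module R N]
    {f : M →ₗ[R] N} (hf : ∀ i, ∀ x ∈ ℳ i, f x ∈ 𝒩 i) :
    (LinearMap.ker f).IsHomogeneous ℳ := fun i x hx => by
  rw [LinearMap.mem_ker] at hx ⊢
  rw [← coe_decompose_map hf, hx, decompose_zero, DirectSum.zero_apply, ZeroMemClass.coe_zero]

theorem Submodule.IsHomogeneous.exists_finset_span_eq {R : Type*} [Semiring R] [Module R M]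
    {K : Submodule R M} (hK : K.IsHomogeneous ℳ) (hfg : K.FG) :
    ∃ s : Finset M, (∀ x ∈ s, SetLike.IsHomogeneousElem ℳ x) ∧ span R s = K := by
  have hspan : span R {x | x ∈ K ∧ SetLike.IsHomogeneousElem ℳ x} = K := by
    refine le_antisymm (span_le.2 fun x hx => hx.1) fun x hx => ?_
    classical
    rw [← sum_support_decompose ℳ x]
    exact sum_mem fun i _ => subset_span ⟨hK i hx, i, (decompose ℳ x i).2⟩
  obtain ⟨s, hs, hspan'⟩ := (fg_span_iff_fg_span_finset_subset _).1 (hspan ▸ hfg)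
  exact ⟨s, fun x hx => (hs hx).2, hspan'.symm.trans hspan⟩

end Homogeneous

theorem Submodule.finrank_eq_finrank_inf_ker_add_finrank_map {k V W : Type*} [Field k]
    [AddCommGroup V] [Module k V] [AddCommGroup W] [Module k W] (g : V →ₗ[k] W) (A : Submodule k V)
    [FiniteDimensional k A] :
    Module.finrank k A = Module.finrank k (LinearMap.ker g ⊓ A : Submodule k V) +
      Module.finrank k (A.map g) := by
  have h := LinearMap.finrank_range_add_finrank_ker (g ∘ₗ A.subtype)
  have hker : (LinearMap.ker g).comap A.subtype = (LinearMap.ker g ⊓ A).comap A.subtype := by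
    rw [Submodule.comap_inf, Submodule.comap_subtype_self, inf_top_eq]
  rw [LinearMap.range_comp, Submodule.range_subtype, LinearMap.ker_comp, hker] at h
  rw [← h, add_comm, (Submodule.comapSubtypeEquivOfLe inf_le_right).finrank_eq]

def Submodule.piUnivEquiv {ι K : Type*} {V : ι → Type*} [Semiring K] [∀ i, AddCommMonoid (V i)]
    [∀ i, Module K (V i)] (p : ∀ i, Submodule K (V i)) :
    Submodule.pi Set.univ p ≃ₗ[K] Π i, p i where
  toFun v i := ⟨v.1 i, v.2 i trivial⟩
  invFun w := ⟨fun i => w i, fun i _ => (w i).2⟩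
  map_add' _ _ := rfl
  map_smul' _ _ := rfl
  left_inv _ := rfl
  right_inv _ := rfl

instance Submodule.finiteDimensional_ite_bot {K V : Type*} [DivisionRing K] [AddCommGroup V]
    [Module K V] (c : Prop) [Decidable c] (A : Submodule K V) [FiniteDimensional K A] :
    FiniteDimensional K ↥(if c then A else ⊥) :=
  Submodule.finiteDimensional_of_le (by split_ifs; exacts [le_rfl, bot_le])

theorem Finset.sum_range_mul_card_filter_eq {ι : Type*} [Fintype ι] (e : ι → ℕ) (a : ℕ → ℕ)
    (N : ℕ) : ∑ p ∈ Finset.range (N + 1), a p * (Finset.univ.filter fun l => e l = N - p).card =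
      ∑ l, if e l ≤ N then a (N - e l) else 0 := by
  simp_rw [Finset.card_filter, Finset.mul_sum, mul_ite, mul_one, mul_zero]
  rw [Finset.sum_comm]
  refine Finset.sum_congr rfl fun l _ => ?_
  split_ifs with hl
  · rw [Finset.sum_eq_single_of_mem (N - e l) (Finset.mem_range.2 (by omega)) fun p hp hne => by
      rw [if_neg (by simp at hp; omega)], if_pos (by omega)]
  · exact Finset.sum_eq_zero fun p hp => if_neg (by simp at hp; omega)

section GradedLinearMap

variable {ι k R M N : Type*} [DecidableEq ι] [Field k] [CommRing R] [Algebra k R]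
  [AddCommGroup M] [Module k M] [Module R M] [IsScalarTower k R M]
  [AddCommGroup N] [Module k N] [Module R N] [IsScalarTower k R N]
  {ℳ : ι → Submodule k M} {𝒩 : ι → Submodule k N} [Decomposition ℳ] [Decomposition 𝒩]
  {f : M →ₗ[R] N}

theorem LinearMap.map_gradedPiece (hf : ∀ i, ∀ x ∈ ℳ i, f x ∈ 𝒩 i) (i : ι) :
    (ℳ i).map (f.restrictScalars k) = (LinearMap.range f).restrictScalars k ⊓ 𝒩 i := by
  refine le_antisymm (Submodule.map_le_iff_le_comap.2 fun x hx => ⟨⟨x, rfl⟩, hf i x hx⟩) ?_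
  rintro _ ⟨⟨x, rfl⟩, hx⟩
  refine ⟨decompose ℳ x i, (decompose ℳ x i).2, ?_⟩
  rw [LinearMap.restrictScalars_apply, ← coe_decompose_map hf, decompose_of_mem_same 𝒩 hx]

theorem LinearMap.finrank_gradedPiece (hf : ∀ i, ∀ x ∈ ℳ i, f x ∈ 𝒩 i) (i : ι)
    [FiniteDimensional k (ℳ i)] :
    Module.finrank k (ℳ i) =
      Module.finrank k ((LinearMap.ker f).restrictScalars k ⊓ ℳ i : Submodule k M) +
        Module.finrank k ((LinearMap.range f).restrictScalars k ⊓ 𝒩 i : Submodule k N) := by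
  rw [← map_gradedPiece hf,
    Submodule.finrank_eq_finrank_inf_ker_add_finrank_map (f.restrictScalars k),
    LinearMap.ker_restrictScalars]

end GradedLinearMap

section ConnectedGradedAlgebra

variable {k R : Type*} [Field k] [CommRing R] [Algebra k R]
  (𝒜 : ℕ → Submodule k R) [GradedAlgebra 𝒜]

theorem exists_sub_algebraMap_mem_irrelevant (hconn : ∀ r ∈ 𝒜 0, ∃ c : k, r = algebraMap k R c)
    (r : R) : ∃ c : k, r - algebraMap k R c ∈ 𝒜₊ := by
  obtain ⟨c, hc⟩ := hconn _ (decompose 𝒜 r 0).2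
  refine ⟨c, ?_⟩
  rw [mem_irrelevant_iff, GradedRing.proj_apply, decompose_sub, DirectSum.sub_apply,
    AddSubgroupClass.coe_sub, ← hc, decompose_of_mem_same 𝒜 (decompose 𝒜 r 0).2, sub_self]

theorem exists_finset_span_eq_irrelevant [IsNoetherianRing R] :
    ∃ s : Finset R, (∀ x ∈ s, ∃ i, 0 < i ∧ x ∈ 𝒜 i) ∧ Ideal.span s = (𝒜₊).toIdeal := by
  obtain ⟨s, hs, hspan⟩ := (Submodule.fg_span_iff_fg_span_finset_subset _).1
    (irrelevant_eq_span 𝒜 ▸ IsNoetherian.noetherian (𝒜₊).toIdeal)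
  exact ⟨s, fun x hx => by simpa using hs hx, hspan.symm.trans (irrelevant_eq_span 𝒜).symm⟩

theorem finiteDimensional_of_connected [IsNoetherianRing R]
    (hconn : ∀ r ∈ 𝒜 0, ∃ c : k, r = algebraMap k R c) (p : ℕ) : FiniteDimensional k (𝒜 p) := by
  classical
  obtain ⟨s, hs, hspan⟩ := exists_finset_span_eq_irrelevant 𝒜
  choose! deg hdeg_pos hdeg using hs
  induction p using Nat.strong_induction_on with | _ p IH
  rcases p.eq_zero_or_pos with rfl | hp
  · have : 𝒜 0 ≤ Submodule.span k {1} := fun r hr => by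
      obtain ⟨c, rfl⟩ := hconn r hr
      exact Submodule.mem_span_singleton.2 ⟨c, (Algebra.algebraMap_eq_smul_one c).symm⟩
    exact Submodule.finiteDimensional_of_le this
  -- writing `r ∈ 𝒜₊ = (s)` as `∑ fₓ x`, its degree-`p` part is `∑ (fₓ)_{p - deg x} x`
  have hle : 𝒜 p ≤ ⨆ x : s, (𝒜 (p - deg x)).map (LinearMap.mulRight k (x : R)) := by
    intro r hr
    obtain ⟨f, -, hf⟩ := Submodule.mem_span_finset.1
      (hspan ▸ mem_irrelevant_of_mem 𝒜 hp hr : r ∈ Ideal.span (s : Set R))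
    rw [← decompose_of_mem_same 𝒜 hr, ← hf, decompose_sum, DFinsupp.finsetSum_apply,
      AddSubmonoidClass.coe_finsetSum, ← Finset.sum_coe_sort]
    refine Submodule.sum_mem _ fun x _ => ?_
    rw [smul_eq_mul, coe_decompose_mul_of_right_mem 𝒜 p (hdeg x x.2)]
    split_ifs
    · exact Submodule.mem_iSup_of_mem x ⟨_, (decompose 𝒜 (f x) _).2, rfl⟩
    · exact Submodule.zero_mem _
  have : ∀ x : s, FiniteDimensional k ((𝒜 (p - deg x)).map (LinearMap.mulRight k (x : R))) :=
    fun x => haveI := IH _ (Nat.sub_lt hp (hdeg_pos x x.2)); inferInstance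
  exact Submodule.finiteDimensional_of_le hle

end ConnectedGradedAlgebra

section GradedModule

variable {k R V : Type*} [Field k] [CommRing R] [Algebra k R]
  (𝒜 : ℕ → Submodule k R) [GradedAlgebra 𝒜]
  [AddCommGroup V] [Module k V] [Module R V] (𝒱 : ℕ → Submodule k V) [Decomposition 𝒱]

theorem coe_decompose_smul [SetLike.GradedSMul 𝒜 𝒱] (r : R) (v : V) (d : ℕ) :
    (decompose 𝒱 (r • v) d : V) =
      ∑ c ∈ Finset.range (d + 1), (decompose 𝒜 r c : R) • (decompose 𝒱 v (d - c) : V) := by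
  induction v using Decomposition.inductionOn 𝒱 with
  | zero => simp
  | add v w hv hw =>
    simp only [smul_add, decompose_add, DirectSum.add_apply, Submodule.coe_add, hv, hw,
      Finset.sum_add_distrib]
  | @homogeneous D v =>
    induction r using Decomposition.inductionOn 𝒜 with
    | zero => simp
    | add r s hr hs =>
      simp only [add_smul, decompose_add, DirectSum.add_apply, Submodule.coe_add, hr, hs,
        Finset.sum_add_distrib]
    | @homogeneous c r =>
      have hrv : (r : R) • (v : V) ∈ 𝒱 (c + D) := SetLike.GradedSMul.smul_mem r.2 v.2
      by_cases hcd : c ≤ d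
      · rw [Finset.sum_eq_single_of_mem c (by simp; omega) fun c' _ hc' => by
          rw [decompose_of_mem_ne 𝒜 r.2 hc'.symm, zero_smul],
          decompose_of_mem_same 𝒜 r.2]
        by_cases hd : c + D = d
        · subst hd
          rw [decompose_of_mem_same 𝒱 hrv, Nat.add_sub_cancel_left, decompose_of_mem_same 𝒱 v.2]
        · rw [decompose_of_mem_ne 𝒱 hrv hd, decompose_of_mem_ne 𝒱 v.2 (by omega), smul_zero]
      · rw [decompose_of_mem_ne 𝒱 hrv (by omega), Finset.sum_eq_zero fun c' hc' => by
          rw [decompose_of_mem_ne 𝒜 r.2 (by simp at hc'; omega), zero_smul]]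

theorem Submodule.isHomogeneous_span [SetLike.GradedSMul 𝒜 𝒱] (s : Set V)
    (hs : ∀ x ∈ s, SetLike.IsHomogeneousElem 𝒱 x) :
    (Submodule.span R s).IsHomogeneous 𝒱 := by
  intro i x hx
  induction hx using Submodule.span_induction generalizing i with
  | mem x hx =>
    obtain ⟨D, hD⟩ := hs x hx
    by_cases hiD : D = i
    · rw [← hiD, decompose_of_mem_same 𝒱 hD]; exact Submodule.subset_span hx
    · rw [decompose_of_mem_ne 𝒱 hD hiD]; exact Submodule.zero_mem _
  | zero => simp
  | add x y _ _ hx hy =>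
    rw [decompose_add, DirectSum.add_apply, Submodule.coe_add]
    exact Submodule.add_mem _ (hx i) (hy i)
  | smul r x _ hx =>
    rw [coe_decompose_smul 𝒜]; exact Submodule.sum_mem _ fun c _ => Submodule.smul_mem _ _ (hx _)

theorem Submodule.IsHomogeneous.le_of_le_sup_irrelevant_smul [SetLike.GradedSMul 𝒜 𝒱]
    {K N : Submodule R V} (hK : K.IsHomogeneous 𝒱) (hN : N.IsHomogeneous 𝒱)
    (h : K ≤ N ⊔ (𝒜₊).toIdeal • K) : K ≤ N := by
  suffices ∀ d, ∀ v ∈ K, v ∈ 𝒱 d → v ∈ N from fun v hv =>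
    (hN.mem_iff 𝒱).2 fun d => this d _ (hK d hv) (decompose 𝒱 v d).2
  intro d
  induction d using Nat.strong_induction_on with | _ d IH
  intro v hvK hvd
  obtain ⟨n, hn, w, hw, rfl⟩ := Submodule.mem_sup.1 (h hvK)
  rw [← decompose_of_mem_same 𝒱 hvd, decompose_add, DirectSum.add_apply, Submodule.coe_add]
  refine N.add_mem (hN d hn) ?_
  -- the degree-`d` part of `r • u` with `r ∈ 𝒜₊` only involves components of `u` of degree `< d`
  refine Submodule.smul_induction_on hw (fun r hr u hu => ?_) fun x y hx hy => ?_
  · rw [coe_decompose_smul 𝒜]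
    refine Submodule.sum_mem _ fun c hc => ?_
    rcases c.eq_zero_or_pos with rfl | hc0
    · rw [show (decompose 𝒜 r 0 : R) = 0 from hr, zero_smul]; exact N.zero_mem
    · exact N.smul_mem _ (IH _ (by simp at hc; omega) _ (hK _ hu) (decompose 𝒱 u _).2)
  · rw [decompose_add, DirectSum.add_apply, Submodule.coe_add]; exact N.add_mem hx hy

theorem exists_mkQ_smul_eq_smul [IsScalarTower k R V]
    (hconn : ∀ r ∈ 𝒜 0, ∃ c : k, r = algebraMap k R c) {K : Submodule R V} (r : R) {w : V}
    (hw : w ∈ K) : ∃ c : k, r - algebraMap k R c ∈ 𝒜₊ ∧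
      ((𝒜₊).toIdeal • K).mkQ (r • w) = c • ((𝒜₊).toIdeal • K).mkQ w := by
  obtain ⟨c, hc⟩ := exists_sub_algebraMap_mem_irrelevant 𝒜 hconn r
  refine ⟨c, hc, ?_⟩
  have := (Submodule.Quotient.mk_eq_zero _).2 (Submodule.smul_mem_smul hc hw)
  rwa [sub_smul, Submodule.Quotient.mk_sub, sub_eq_zero, algebraMap_smul] at this

theorem exists_minimal_homogeneous_generators [IsScalarTower k R V] [SetLike.GradedSMul 𝒜 𝒱]
    (hconn : ∀ r ∈ 𝒜 0, ∃ c : k, r = algebraMap k R c)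
    {K : Submodule R V} (hK : K.IsHomogeneous 𝒱) (hfg : K.FG) :
    ∃ (n : ℕ) (e : Fin n → ℕ) (g : Fin n → V), Submodule.span R (Set.range g) = K ∧
      (∀ j, g j ∈ 𝒱 (e j)) ∧ (∀ j, g j ≠ 0) ∧
      ∀ v : Fin n → R, ∑ j, v j • g j = 0 → ∀ j, v j ∈ 𝒜₊ := by
  classical
  obtain ⟨s, hs, hspan⟩ := hK.exists_finset_span_eq hfg
  set mk := ((𝒜₊).toIdeal • K).mkQ
  have : FiniteDimensional k (Submodule.span k (mk '' s)) :=
    FiniteDimensional.span_of_finite k ((s.finite_toSet).image _)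
  obtain ⟨f, hfs, hfspan, hfind⟩ := Submodule.exists_fun_fin_finrank_span_eq k (mk '' s)
  -- `g` lifts a `k`-basis `f` of the image of `K` in `V ⧸ 𝒜₊K`
  choose g hgs hgf using hfs
  choose e he using fun j => hs _ (hgs j)
  refine ⟨_, e, g, le_antisymm ?_ ?_, he,
    fun j hg => hfind.ne_zero j (by rw [← hgf, hg, map_zero]), ?_⟩
  · exact Submodule.span_le.2 fun _ ⟨j, hj⟩ => hj ▸ hspan ▸ Submodule.subset_span (hgs j)
  · refine hK.le_of_le_sup_irrelevant_smul 𝒜 𝒱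
      (Submodule.isHomogeneous_span 𝒜 𝒱 _ fun _ ⟨j, hj⟩ => hj ▸ ⟨e j, he j⟩)
      (hspan.symm.trans_le (Submodule.span_le.2 fun x hx => ?_))
    obtain ⟨c, hc⟩ := (Submodule.mem_span_range_iff_exists_fun k).1
      (by rw [hfspan]; exact Submodule.subset_span ⟨x, hx, rfl⟩ :
        mk x ∈ Submodule.span k (Set.range f))
    set w := ∑ j, algebraMap k R (c j) • g j
    have hw : w ∈ Submodule.span R (Set.range g) :=
      Submodule.sum_mem _ fun j _ => Submodule.smul_mem _ _ (Submodule.subset_span ⟨j, rfl⟩)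
    have hxw : x - w ∈ (𝒜₊).toIdeal • K := by
      rw [← Submodule.ker_mkQ ((𝒜₊).toIdeal • K), LinearMap.mem_ker, map_sub, sub_eq_zero, ← hc]
      simp only [w, map_sum, algebraMap_smul, LinearMap.map_smul_of_tower, mk, hgf]
    exact sub_add_cancel x w ▸ Submodule.add_mem _ (Submodule.mem_sup_right hxw)
      (Submodule.mem_sup_left hw)
  · intro v hv j
    choose c hc hcmk using fun j =>
      exists_mkQ_smul_eq_smul 𝒜 hconn (v j) (hspan ▸ Submodule.subset_span (hgs j))
    have hcf : ∑ j, c j • f j = 0 := by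
      rw [← map_zero mk, ← hv, map_sum]
      exact Finset.sum_congr rfl fun j _ => by rw [← hgf]; exact (hcmk j).symm
    simpa [Fintype.linearIndependent_iff.1 hfind c hcf j] using hc j

end GradedModule

section FreeGradedModule

variable {k R ι : Type*} [Field k] [CommRing R] [Algebra k R]
  (𝒜 : ℕ → Submodule k R)

/-- The grading of the free module `⨁ₗ R(-e l)`, in which `Pi.single l 1` has degree `e l`. -/
def freeGrading (e : ι → ℕ) (N : ℕ) : Submodule k (ι → R) :=
  Submodule.pi Set.univ fun l => if e l ≤ N then 𝒜 (N - e l) else ⊥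

variable {𝒜} {e : ι → ℕ} {N : ℕ} {v : ι → R}

theorem apply_mem_of_mem_freeGrading (hv : v ∈ freeGrading 𝒜 e N) {l : ι} (hl : e l ≤ N) :
    v l ∈ 𝒜 (N - e l) := by
  simpa [hl] using hv l trivial

theorem apply_eq_zero_of_mem_freeGrading (hv : v ∈ freeGrading 𝒜 e N) {l : ι} (hl : N < e l) :
    v l = 0 := by
  simpa [hl.not_ge] using hv l trivial

theorem mem_freeGrading_iff :
    v ∈ freeGrading 𝒜 e N ↔ ∀ l, v l = 0 ∨ ∃ c, N = e l + c ∧ v l ∈ 𝒜 c := by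
  refine ⟨fun hv l => ?_, fun hv l _ => ?_⟩
  · rcases le_or_gt (e l) N with hl | hl
    · exact .inr ⟨N - e l, by omega, apply_mem_of_mem_freeGrading hv hl⟩
    · exact .inl (apply_eq_zero_of_mem_freeGrading hv hl)
  · rcases hv l with h | ⟨c, rfl, h⟩
    · simp [h]
    · simpa using h

theorem freeGrading_eq_bot (h : ∀ l, N < e l) : freeGrading 𝒜 e N = ⊥ :=
  eq_bot_iff.2 fun _ hv => funext fun l => apply_eq_zero_of_mem_freeGrading hv (h l)

theorem single_mem_freeGrading [DecidableEq ι] {x : R} {c : ℕ} (hx : x ∈ 𝒜 c) (l : ι) :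
    Pi.single l x ∈ freeGrading 𝒜 e (c + e l) :=
  mem_freeGrading_iff.2 fun l' => by
    rcases eq_or_ne l' l with rfl | hl
    · exact .inr ⟨c, add_comm _ _, by simpa using hx⟩
    · exact .inl (Pi.single_eq_of_ne hl _)

instance [GradedAlgebra 𝒜] : SetLike.GradedSMul 𝒜 (freeGrading 𝒜 e) where
  smul_mem {i j} r v hr hv := (mem_freeGrading_iff.2 fun l => by
    rcases mem_freeGrading_iff.1 hv l with h | ⟨c, rfl, h⟩
    · exact .inl (by simp [h])
    · exact .inr ⟨i + c, by rw [vadd_eq_add]; omega, SetLike.GradedMul.mul_mem hr h⟩)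

theorem LinearMap.map_mem_of_mem_freeGrading {V : Type*} [Fintype ι] [DecidableEq ι]
    [AddCommGroup V] [Module k V] [Module R V] {𝒱 : ℕ → Submodule k V} [SetLike.GradedSMul 𝒜 𝒱]
    {φ : (ι → R) →ₗ[R] V} (hφ : ∀ j, φ (Pi.single j 1) ∈ 𝒱 (e j)) :
    ∀ D, ∀ v ∈ freeGrading 𝒜 e D, φ v ∈ 𝒱 D := by
  intro D v hv
  rw [← Finset.univ_sum_single v, map_sum]
  refine sum_mem fun j _ => ?_
  rw [← mul_one (v j), ← smul_eq_mul, Pi.single_smul', map_smul]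
  rcases mem_freeGrading_iff.1 hv j with h | ⟨c, rfl, h⟩
  · rw [h, zero_smul]; exact zero_mem _
  · simpa [add_comm] using SetLike.GradedSMul.smul_mem h (hφ j)

theorem isInternal_freeGrading [GradedAlgebra 𝒜] [Fintype ι] : IsInternal (freeGrading 𝒜 e) := by
  classical
  refine ⟨(injective_iff_map_eq_zero _).2 fun w hw => ?_, fun v => ?_⟩
  · have hsum : ∑ N ∈ w.support, (w N : ι → R) = 0 := by
      rw [← hw, coeAddMonoidHom_eq_dfinsuppSum]
      rfl
    ext N l
    rcases le_or_gt (e l) N with hl | hl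
    · -- the degree-`(N - e l)` part of the `l`-th coordinate of `∑ w` only sees `w N`
      have key : ∀ N', (decompose 𝒜 ((w N' : ι → R) l) (N - e l) : R) =
          if N' = N then (w N : ι → R) l else 0 := by
        intro N'
        split_ifs with h
        · subst h; exact decompose_of_mem_same 𝒜 (apply_mem_of_mem_freeGrading (w N').2 hl)
        rcases le_or_gt (e l) N' with hl' | hl'
        · exact decompose_of_mem_ne 𝒜 (apply_mem_of_mem_freeGrading (w N').2 hl') (by omega)
        · simp [apply_eq_zero_of_mem_freeGrading (w N').2 hl']
      have := congr_arg (fun v : ι → R => (decompose 𝒜 (v l) (N - e l) : R)) hsum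
      simp only [Finset.sum_apply, Pi.zero_apply, decompose_sum, decompose_zero] at this
      rw [DFinsupp.finsetSum_apply, AddSubmonoidClass.coe_finsetSum] at this
      simp only [key, Finset.sum_ite_eq'] at this
      split_ifs at this with hN
      · simpa using this
      · simp [DFinsupp.notMem_support_iff.1 hN]
    · simp [apply_eq_zero_of_mem_freeGrading (w N).2 hl]
  · have hrange : ∀ N, ∀ x ∈ freeGrading 𝒜 e N,
        x ∈ AddMonoidHom.mrange (DirectSum.coeAddMonoidHom (freeGrading 𝒜 e)) :=
      fun N x hx => ⟨of _ N ⟨x, hx⟩, coeAddMonoidHom_of _ _ _⟩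
    suffices v ∈ AddMonoidHom.mrange (DirectSum.coeAddMonoidHom (freeGrading 𝒜 e)) from this
    rw [← Finset.univ_sum_single v]
    refine sum_mem fun l _ => ?_
    rw [← sum_support_decompose 𝒜 (v l), ← AddMonoidHom.single_apply, map_sum]
    exact sum_mem fun c _ => hrange _ _ (single_mem_freeGrading (decompose 𝒜 (v l) c).2 l)

noncomputable instance [GradedAlgebra 𝒜] [Fintype ι] :
    Decomposition (freeGrading 𝒜 e) :=
  isInternal_freeGrading.chooseDecomposition

instance [Fintype ι] [∀ p, FiniteDimensional k (𝒜 p)] :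
    FiniteDimensional k (freeGrading 𝒜 e N) :=
  (Submodule.piUnivEquiv _).symm.finiteDimensional

theorem finrank_freeGrading [Fintype ι] [∀ p, FiniteDimensional k (𝒜 p)] :
    Module.finrank k (freeGrading 𝒜 e N) = ∑ p ∈ Finset.range (N + 1),
      Module.finrank k (𝒜 p) * (Finset.univ.filter fun l => e l = N - p).card := by
  rw [Finset.sum_range_mul_card_filter_eq, freeGrading, (Submodule.piUnivEquiv _).finrank_eq,
    Module.finrank_pi_fintype]
  exact Finset.sum_congr rfl fun l _ =>
    (apply_ite (fun S : Submodule k R => Module.finrank k S) _ _ _).trans (by rw [finrank_bot])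

end FreeGradedModule


section MinimalResolution

variable {k R : Type*} [Field k] [CommRing R] [Algebra k R]
  (𝒜 : ℕ → Submodule k R) [GradedAlgebra 𝒜]

-- The kernels `ker (Fᵢ → Fᵢ₋₁)` of a minimal graded free resolution have this shape.
structure MinimalSyzygy where
  n : ℕ
  e : Fin n → ℕ
  K : Submodule R (Fin n → R)
  isHomogeneous : K.IsHomogeneous (freeGrading 𝒜 e)
  apply_mem_irrelevant : ∀ v ∈ K, ∀ l, v l ∈ 𝒜₊

variable {𝒜}

theorem MinimalSyzygy.exists_cover (hconn : ∀ r ∈ 𝒜 0, ∃ c : k, r = algebraMap k R c)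
    {V : Type*} [AddCommGroup V] [Module k V] [Module R V] [IsScalarTower k R V]
    {𝒱 : ℕ → Submodule k V} [Decomposition 𝒱] [SetLike.GradedSMul 𝒜 𝒱]
    {K : Submodule R V} (hK : K.IsHomogeneous 𝒱) (hfg : K.FG) :
    ∃ (S : MinimalSyzygy 𝒜) (φ : (Fin S.n → R) →ₗ[R] V),
      LinearMap.range φ = K ∧ LinearMap.ker φ = S.K ∧
        ∀ j, φ (Pi.single j 1) ∈ 𝒱 (S.e j) ∧ φ (Pi.single j 1) ≠ 0 := by
  classical
  obtain ⟨n, e, g, hspan, hg, hg0, hmin⟩ := exists_minimal_homogeneous_generators 𝒜 𝒱 hconn hK hfg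
  have hcol : ∀ j, Fintype.linearCombination R g (Pi.single j 1) = g j := by simp
  refine ⟨⟨n, e, _, LinearMap.isHomogeneous_ker
    (LinearMap.map_mem_of_mem_freeGrading fun j => hcol j ▸ hg j),
    fun v hv => hmin v (by simpa [Fintype.linearCombination_apply] using hv)⟩,
    Fintype.linearCombination R g, by rw [Fintype.range_linearCombination, hspan], rfl,
    fun j => by rw [hcol]; exact ⟨hg j, hg0 j⟩⟩

theorem MinimalSyzygy.exists_next [IsNoetherianRing R]
    (hconn : ∀ r ∈ 𝒜 0, ∃ c : k, r = algebraMap k R c) (S : MinimalSyzygy 𝒜) :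
    ∃ (T : MinimalSyzygy 𝒜) (φ : (Fin T.n → R) →ₗ[R] (Fin S.n → R)),
      LinearMap.range φ = S.K ∧ LinearMap.ker φ = T.K ∧
        (∀ j, φ (Pi.single j 1) ∈ freeGrading 𝒜 S.e (T.e j)) ∧ ∀ j, ∃ l, S.e l < T.e j := by
  obtain ⟨T, φ, hrange, hker, hφ⟩ := exists_cover hconn S.isHomogeneous (IsNoetherian.noetherian _)
  refine ⟨T, φ, hrange, hker, fun j => (hφ j).1, fun j => ?_⟩
  -- a nonzero entry of the `j`-th column lies in `𝒜₊`, so has positive degree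
  obtain ⟨l, hl⟩ := Function.ne_iff.1 (hφ j).2
  have hmem := S.apply_mem_irrelevant _ (hrange ▸ LinearMap.mem_range_self φ (Pi.single j 1)) l
  rcases mem_freeGrading_iff.1 (hφ j).1 l with h | ⟨c, hc, h⟩
  · exact absurd h hl
  · refine ⟨l, lt_of_le_of_ne (hc ▸ Nat.le_add_right _ _) fun heq => hl ?_⟩
    rw [show c = 0 by omega] at h
    rw [← decompose_of_mem_same 𝒜 h]
    exact hmem

theorem sum_range_neg_one_pow_mul_telescope (f g : ℕ → ℤ) (a : ℤ) (h₀ : f 0 = g 0 + a)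
    (hs : ∀ i, f (i + 1) = g (i + 1) + g i) (N : ℕ) :
    ∑ i ∈ Finset.range (N + 1), (-1) ^ i * f i = a + (-1) ^ N * g N := by
  induction N with
  | zero => simp [h₀, add_comm]
  | succ N ih => rw [Finset.sum_range_succ, ih, hs, pow_succ]; ring

theorem finrank_eq_alternating_sum_of_resolution [∀ p, FiniteDimensional k (𝒜 p)]
    {M : Type*} [AddCommGroup M] [Module k M] [Module R M] [IsScalarTower k R M]
    {ℳ : ℕ → Submodule k M} [Decomposition ℳ] {n : ℕ → ℕ} {e : ∀ i, Fin (n i) → ℕ}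
    {d : ∀ i, (Fin (n (i + 1)) → R) →ₗ[R] (Fin (n i) → R)} {ε : (Fin (n 0) → R) →ₗ[R] M}
    (hε : Function.Surjective ε) (hε₀ : LinearMap.ker ε = LinearMap.range (d 0))
    (hd : ∀ i, LinearMap.ker (d i) = LinearMap.range (d (i + 1)))
    (hεdeg : ∀ D, ∀ v ∈ freeGrading 𝒜 (e 0) D, ε v ∈ ℳ D)
    (hddeg : ∀ i D, ∀ v ∈ freeGrading 𝒜 (e (i + 1)) D, d i v ∈ freeGrading 𝒜 (e i) D)
    (he : ∀ i j, i ≤ e i j) (N : ℕ) :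
    (Module.finrank k (ℳ N) : ℤ) =
      ∑ i ∈ Finset.range (N + 1), (-1) ^ i * (Module.finrank k (freeGrading 𝒜 (e i) N) : ℤ) := by
  -- `g i` is the dimension of the degree-`N` part of the `i`-th syzygy module `im dᵢ = ker dᵢ₋₁`
  set g : ℕ → ℤ := fun i => Module.finrank k
    ((LinearMap.range (d i)).restrictScalars k ⊓ freeGrading 𝒜 (e i) N : Submodule k _)
  have h₀ : (Module.finrank k (freeGrading 𝒜 (e 0) N) : ℤ) = g 0 + Module.finrank k (ℳ N) := by
    have := LinearMap.finrank_gradedPiece hεdeg N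
    rw [hε₀, LinearMap.range_eq_top.2 hε, Submodule.restrictScalars_top, top_inf_eq] at this
    simp only [g]
    exact_mod_cast this
  have hs (i : ℕ) : (Module.finrank k (freeGrading 𝒜 (e (i + 1)) N) : ℤ) = g (i + 1) + g i := by
    have := LinearMap.finrank_gradedPiece (hddeg i) N
    rw [hd i] at this
    simp only [g]
    exact_mod_cast this
  have hN : g N = 0 := by
    simp only [g]
    rw [← LinearMap.map_gradedPiece (hddeg N),
      freeGrading_eq_bot fun j => Nat.lt_of_lt_of_le N.lt_succ_self (he (N + 1) j),
      Submodule.map_bot, finrank_bot, Nat.cast_zero]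
  rw [sum_range_neg_one_pow_mul_telescope _ g _ h₀ hs, hN, mul_zero, add_zero]

end MinimalResolution

/-- `Torᵢᴿ(M, k)` is read off a minimal graded free resolution `F`: minimality kills the
differentials of `F ⊗ k`, so `Hilb(Torᵢᴿ(M, k), t) = Σⱼ t ^ e i j`. -/
theorem stmt_5 (k : Type) [Field k] (R : Type) [CommRing R] [Algebra k R]
    (𝒜 : ℕ → Submodule k R) [GradedAlgebra 𝒜] [IsNoetherianRing R]
    (hconn : ∀ r ∈ 𝒜 0, ∃ c : k, r = algebraMap k R c)
    (M : Type) [AddCommGroup M] [Module k M] [Module R M] [IsScalarTower k R M]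
    [Module.Finite R M]
    (ℳ : ℕ → Submodule k M)
    (hdecomp : DirectSum.IsInternal ℳ)
    (hgsmul : ∀ (i j : ℕ) (r : R) (m : M), r ∈ 𝒜 i → m ∈ ℳ j → r • m ∈ ℳ (i + j)) :
    ∃ (n : ℕ → ℕ) (e : ∀ i, Fin (n i) → ℕ)
      (d : ∀ i : ℕ, ((Fin (n (i + 1)) → R) →ₗ[R] (Fin (n i) → R)))
      (ε : (Fin (n 0) → R) →ₗ[R] M),
      -- a graded free resolution of `M` ...
      Function.Surjective ε ∧
      LinearMap.ker ε = LinearMap.range (d 0) ∧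
      (∀ i : ℕ, LinearMap.ker (d i) = LinearMap.range (d (i + 1))) ∧
      (∀ j : Fin (n 0), ε (Pi.single j 1) ∈ ℳ (e 0 j)) ∧
      (∀ (i : ℕ) (j : Fin (n (i + 1))) (l : Fin (n i)),
        d i (Pi.single j 1) l = 0 ∨
          ∃ c : ℕ, e (i + 1) j = e i l + c ∧ d i (Pi.single j 1) l ∈ 𝒜 c) ∧
      -- ... which is minimal (differential entries have vanishing degree-zero component),
      (∀ (i : ℕ) (j : Fin (n (i + 1))) (l : Fin (n i)),
        (DirectSum.decompose 𝒜 (d i (Pi.single j 1) l) 0 : R) = 0) ∧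
      -- with strictly increasing minimal degrees (which gives convergence), and
      (∀ (i : ℕ) (j : Fin (n (i + 1))), ∃ l : Fin (n i), e i l < e (i + 1) j) ∧
      -- the Hilbert series identity, coefficient by coefficient:
      -- `dim M_N = Σ_{p+q=N} dim R_p · (Σ_i (-1)^i #{j | e i j = q})`
      (∀ N : ℕ,
        (Module.finrank k (ℳ N) : ℤ) =
          ∑ p ∈ Finset.range (N + 1), (Module.finrank k (𝒜 p) : ℤ) *
            (∑ i ∈ Finset.range (N + 1), (-1) ^ i *
              ((Finset.univ.filter (fun j : Fin (n i) => e i j = N - p)).card : ℤ))) := by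
  classical
  let : Decomposition ℳ := hdecomp.chooseDecomposition
  have : SetLike.GradedSMul 𝒜 ℳ := ⟨fun i j _ _ hr hm => hgsmul i j _ _ hr hm⟩
  have := finiteDimensional_of_connected 𝒜 hconn
  obtain ⟨S₀, ε, hεrange, hεker, hεcol⟩ := MinimalSyzygy.exists_cover hconn
    (𝒱 := ℳ) (K := ⊤) (fun _ _ _ => trivial) Module.Finite.fg_top
  choose next d hrange hker hcol hlt using MinimalSyzygy.exists_next (𝒜 := 𝒜) hconn
  let S : ℕ → MinimalSyzygy 𝒜 := fun i => Nat.rec S₀ (fun _ => next) i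
  have hε := LinearMap.range_eq_top.1 hεrange
  have hε₀ := hεker.trans (hrange S₀).symm
  have hd (i : ℕ) := (hker (S i)).trans (hrange (S (i + 1))).symm
  have he (i : ℕ) (j : Fin (S i).n) : i ≤ (S i).e j := by
    induction i with
    | zero => exact Nat.zero_le _
    | succ i ih => obtain ⟨l, hl⟩ := hlt (S i) j; exact (ih l).trans_lt hl
  refine ⟨fun i => (S i).n, fun i => (S i).e, fun i => d (S i), ε, hε, hε₀, hd,
    fun j => (hεcol j).1, fun i j => mem_freeGrading_iff.1 (hcol (S i) j),
    fun i j l => (S i).apply_mem_irrelevant _ (hrange (S i) ▸ LinearMap.mem_range_self _ _) l,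
    fun i => hlt (S i), fun N => ?_⟩
  rw [finrank_eq_alternating_sum_of_resolution hε hε₀ hd
    (LinearMap.map_mem_of_mem_freeGrading fun j => (hεcol j).1)
    (fun i => LinearMap.map_mem_of_mem_freeGrading (hcol (S i))) he N]
  simp_rw [finrank_freeGrading, Nat.cast_sum, Nat.cast_mul, Finset.mul_sum]
  rw [Finset.sum_comm]
  exact Finset.sum_congr rfl fun p _ => Finset.sum_congr rfl fun i _ => by ring
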